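/- Let (t, e) be a counital fusion morphism on an object A of a braided monoidal category C, with induced multiplication m := t ≫ (e ⊗ 1_A) ≫ λ_A. Then the 'short fusion equation' holds: (1_A ⊗ t) ≫ (b_{A,A} ⊗ 1_A) ≫ (1_A ⊗ t) ≫ (b_{A,A}⁻¹ ⊗ 1_A) ≫ (m ⊗ 1_A) = (m ⊗ 1_A) ≫ t as morphisms A ⊗ A ⊗ A ⟶ A ⊗ A (suppressing associators). -/

import Mathlib

/-!
Postcompose the fusion equation with `e ⊗ 1 ⊗ 1`. On the left this turns the final `t ⊗ 1`
into `m ⊗ 1`. On the right, `e ⊗ 1 ⊗ 1` slides past `1 ⊗ t` by the interchange law, so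
`(t ⊗ 1) ≫ (1 ⊗ t)` becomes `(t ⊗ 1) ≫ (e ⊗ 1 ⊗ 1) ≫ t = (m ⊗ 1) ≫ t`.
-/

open CategoryTheory Category MonoidalCategory

universe v u

variable {C : Type u} [Category.{v} C] [MonoidalCategory C] [BraidedCategory C]

/-- The fusion equation for `t : A ⊗ A ⟶ A ⊗ A` in a braided monoidal category,
with all coherence isomorphisms made explicit (domain `A ⊗ (A ⊗ A)`). -/
def FusionEq (A : C) (t : A ⊗ A ⟶ A ⊗ A) : Prop :=
  (A ◁ t) ≫ (α_ A A A).inv ≫ ((β_ A A).hom ▷ A) ≫ (α_ A A A).hom ≫ (A ◁ t) ≫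
      (α_ A A A).inv ≫ ((β_ A A).inv ▷ A) ≫ (t ▷ A) ≫ (α_ A A A).hom =
    (α_ A A A).inv ≫ (t ▷ A) ≫ (α_ A A A).hom ≫ (A ◁ t)

/-- The counitality condition `t ≫ (1 ⊗ e) = 1 ⊗ e`. -/
def Counital (A : C) (t : A ⊗ A ⟶ A ⊗ A) (e : A ⟶ 𝟙_ C) : Prop :=
  t ≫ (A ◁ e) = A ◁ e

/-- The multiplication induced by a counital fusion morphism:
`m := t ≫ (e ⊗ 1) ≫ λ_A`. -/
def mulOf (A : C) (t : A ⊗ A ⟶ A ⊗ A) (e : A ⟶ 𝟙_ C) : A ⊗ A ⟶ A :=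
  t ≫ (e ▷ A) ≫ (λ_ A).hom

section

variable {D : Type*} [Category D] [MonoidalCategory D]

theorem whiskerLeft_comp_whiskerRight_leftUnitor {X Y Y' : D} (e : X ⟶ 𝟙_ D) (g : Y ⟶ Y') :
    (X ◁ g) ≫ (e ▷ Y') ≫ (λ_ Y').hom = (e ▷ Y) ≫ (λ_ Y).hom ≫ g := by
  rw [whisker_exchange_assoc, leftUnitor_naturality]

theorem whiskerRight_mulOf (A : D) (t : A ⊗ A ⟶ A ⊗ A) (e : A ⟶ 𝟙_ D) :
    mulOf A t e ▷ A = (t ▷ A) ≫ (α_ A A A).hom ≫ (e ▷ (A ⊗ A)) ≫ (λ_ (A ⊗ A)).hom := by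
  simp [mulOf]

end

theorem shortFusion_general (A : C) (t : A ⊗ A ⟶ A ⊗ A) (e : A ⟶ 𝟙_ C)
    (hfus : FusionEq A t) :
    (A ◁ t) ≫ (α_ A A A).inv ≫ ((β_ A A).hom ▷ A) ≫ (α_ A A A).hom ≫ (A ◁ t) ≫
        (α_ A A A).inv ≫ ((β_ A A).inv ▷ A) ≫ (mulOf A t e ▷ A) =
      (α_ A A A).inv ≫ (mulOf A t e ▷ A) ≫ t := by
  simp only [whiskerRight_mulOf, assoc]
  rw [reassoc_of% hfus, whiskerLeft_comp_whiskerRight_leftUnitor]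

/-- For a counital fusion morphism `(t, e)` on `A` with induced multiplication `m`,
the short fusion equation
`(1 ⊗ t) ≫ (b ⊗ 1) ≫ (1 ⊗ t) ≫ (b⁻¹ ⊗ 1) ≫ (m ⊗ 1) = (m ⊗ 1) ≫ t` holds. -/
theorem shortFusion (A : C) (t : A ⊗ A ⟶ A ⊗ A) (e : A ⟶ 𝟙_ C)
    (hfus : FusionEq A t) (hcou : Counital A t e) :
    (A ◁ t) ≫ (α_ A A A).inv ≫ ((β_ A A).hom ▷ A) ≫ (α_ A A A).hom ≫ (A ◁ t) ≫
        (α_ A A A).inv ≫ ((β_ A A).inv ▷ A) ≫ (mulOf A t e ▷ A) =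
      (α_ A A A).inv ≫ (mulOf A t e ▷ A) ≫ t :=
  shortFusion_general A t e hfus
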